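/- arXiv:0912.1130 — 13 statements merged into one kernel-verified Lean document; each statement's English description precedes it below -/
import Mathlib

section
/- Let a > 0 and c > 0 be real numbers and set f(x) = a·x² − x³. Then: (i) if c > 4a³/27, there is no real x > 0 with f(x) = c; (ii) if c = 4a³/27, then x = 2a/3 is the unique positive real x with f(x) = c; (iii) if c < 4a³/27, there exist exactly two positive real numbers x₁ < x₂ with f(x₁) = f(x₂) = c, and they satisfy 0 < x₁ < 2a/3 < x₂ < a. -/
/-- Al-Tūsī's equation (21): a·x² − x³ = c with a, c > 0 has no, one (double), or
exactly two positive roots according as c is greater than, equal to, or less than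
the maximum value 4a³/27. -/
theorem tusi_eq21_roots (a c : ℝ) (ha : 0 < a) (hc : 0 < c) :
    (4 * a ^ 3 / 27 < c → ¬ ∃ x : ℝ, 0 < x ∧ a * x ^ 2 - x ^ 3 = c) ∧
    (c = 4 * a ^ 3 / 27 →
      (a * (2 * a / 3) ^ 2 - (2 * a / 3) ^ 3 = c ∧
        ∀ x : ℝ, 0 < x → a * x ^ 2 - x ^ 3 = c → x = 2 * a / 3)) ∧
    (c < 4 * a ^ 3 / 27 →
      ∃ x₁ x₂ : ℝ, 0 < x₁ ∧ x₁ < x₂ ∧ x₁ < 2 * a / 3 ∧ 2 * a / 3 < x₂ ∧ x₂ < a ∧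
        a * x₁ ^ 2 - x₁ ^ 3 = c ∧ a * x₂ ^ 2 - x₂ ^ 3 = c ∧
        ∀ x : ℝ, 0 < x → a * x ^ 2 - x ^ 3 = c → (x = x₁ ∨ x = x₂)) := by
  have key : ∀ x : ℝ, 4 * a ^ 3 / 27 - (a * x ^ 2 - x ^ 3)
      = (x - 2 * a / 3) ^ 2 * (x + a / 3) := by intro x; ring
  refine ⟨?_, ?_, ?_⟩
  · rintro hgt ⟨x, hx, hfx⟩
    have h := key x
    nlinarith [sq_nonneg (x - 2 * a / 3)]
  · intro hceq
    refine ⟨by rw [hceq]; ring, ?_⟩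
    intro x hx hfx
    have h := key x
    rw [hfx, hceq] at h
    have h2 : (x - 2 * a / 3) ^ 2 * (x + a / 3) = 0 := by linarith
    have h3 : x + a / 3 > 0 := by linarith
    have h4 : (x - 2 * a / 3) ^ 2 = 0 := by
      rcases mul_eq_zero.mp h2 with h | h
      · exact h
      · linarith
    have := pow_eq_zero_iff (n := 2) (by norm_num) |>.mp h4
    linarith
  · intro hlt
    set F : ℝ → ℝ := fun x => a * x ^ 2 - x ^ 3 with hF
    have hcont : Continuous F := by fun_prop
    -- first root on (0, 2a/3)
    have h1 : c ∈ Set.Ioo (F 0) (F (2 * a / 3)) := by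
      constructor <;> simp only [hF] <;> nlinarith
    obtain ⟨x₁, hx₁mem, hx₁⟩ := intermediate_value_Ioo (by linarith : (0:ℝ) ≤ 2 * a / 3)
      hcont.continuousOn h1
    -- second root on (2a/3, a)
    have h2 : c ∈ Set.Ioo (F a) (F (2 * a / 3)) := by
      constructor <;> simp only [hF] <;> nlinarith
    obtain ⟨x₂, hx₂mem, hx₂⟩ := intermediate_value_Ioo' (by linarith : 2 * a / 3 ≤ a)
      hcont.continuousOn h2
    obtain ⟨hx₁0, hx₁u⟩ := hx₁mem
    obtain ⟨hx₂l, hx₂u⟩ := hx₂mem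
    refine ⟨x₁, x₂, hx₁0, by linarith, hx₁u, hx₂l, hx₂u, hx₁, hx₂, ?_⟩
    intro x hx hfx
    by_contra hne
    push_neg at hne
    obtain ⟨hne1, hne2⟩ := hne
    have e1 : a * x₁ ^ 2 - x₁ ^ 3 = c := hx₁
    have e2 : a * x₂ ^ 2 - x₂ ^ 3 = c := hx₂
    -- from F x = F x₁ and x ≠ x₁ : x² + x·x₁ + x₁² = a(x + x₁)
    have d1 : (x - x₁) * (x ^ 2 + x * x₁ + x₁ ^ 2 - a * (x + x₁)) = 0 := by
      nlinarith [hfx, e1]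
    have d2 : (x - x₂) * (x ^ 2 + x * x₂ + x₂ ^ 2 - a * (x + x₂)) = 0 := by
      nlinarith [hfx, e2]
    have g1 : x ^ 2 + x * x₁ + x₁ ^ 2 - a * (x + x₁) = 0 := by
      rcases mul_eq_zero.mp d1 with h | h
      · exact absurd (by linarith : x = x₁) hne1
      · exact h
    have g2 : x ^ 2 + x * x₂ + x₂ ^ 2 - a * (x + x₂) = 0 := by
      rcases mul_eq_zero.mp d2 with h | h
      · exact absurd (by linarith : x = x₂) hne2
      · exact h
    -- subtracting: (x₁ - x₂)(x + x₁ + x₂ - a) = 0, and x₁ ≠ x₂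
    have g3 : (x₁ - x₂) * (x + x₁ + x₂ - a) = 0 := by nlinarith [g1, g2]
    have hx12 : x₁ - x₂ ≠ 0 := by intro h; nlinarith
    have g4 : x + x₁ + x₂ = a := by
      have := (mul_eq_zero.mp g3).resolve_left hx12
      linarith
    -- substituting back gives x·x₁ + x·x₂ + x₁·x₂ = 0, impossible for positives
    nlinarith [g1, g4, mul_pos hx hx₁0, mul_pos hx (lt_trans hx₁0 (by linarith : x₁ < x₂)),
      mul_pos hx₁0 (lt_trans hx₁0 (by linarith : x₁ < x₂))]
end

section
/- Let a > 0 and c > 0 be real numbers, and let x₁ < x₂ be the two distinct positive roots of a·x² − x³ = c (so a·x₁² − x₁³ = a·x₂² − x₂³ = c). Then x₂ < a, x₁ + x₂ > a, and the number X = x₁ − (a − x₂) is positive and satisfies X² + (a − x₂)·X = x₂·(a − x₂). Consequently x₁ = (a − x₂) + X where X is the unique positive root of the quadratic equation X² + (a − x₂)·X = x₂·(a − x₂). -/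
/-- Al-Tūsī's determination of the smaller root x₁ of a·x² − x³ = c from the larger
root x₂: one has x₂ < a, x₁ + x₂ > a, and X = x₁ − (a − x₂) is the unique positive
root of the quadratic X² + (a − x₂)·X = x₂·(a − x₂) of type (7). -/
theorem tusi_eq21_smaller_root (a c x₁ x₂ : ℝ) (ha : 0 < a) (hc : 0 < c)
    (h₁ : 0 < x₁) (h₁₂ : x₁ < x₂)
    (e₁ : a * x₁ ^ 2 - x₁ ^ 3 = c) (e₂ : a * x₂ ^ 2 - x₂ ^ 3 = c) :
    x₂ < a ∧ a < x₁ + x₂ ∧ 0 < x₁ - (a - x₂) ∧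
    (x₁ - (a - x₂)) ^ 2 + (a - x₂) * (x₁ - (a - x₂)) = x₂ * (a - x₂) ∧
    (∀ X : ℝ, 0 < X → X ^ 2 + (a - x₂) * X = x₂ * (a - x₂) →
      X = x₁ - (a - x₂)) := by
  have h₂ : 0 < x₂ := h₁.trans h₁₂
  have key : a * (x₁ + x₂) = x₁ ^ 2 + x₁ * x₂ + x₂ ^ 2 := by
    have h := e₁.trans e₂.symm
    have hne : x₁ - x₂ ≠ 0 := by intro h'; nlinarith
    nlinarith [sq_nonneg (x₁ - x₂), mul_self_nonneg (x₁ - x₂)]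
  have hsum : 0 < x₁ + x₂ := by linarith
  have h2a : x₂ < a := by nlinarith [sq_nonneg x₁]
  have h3 : a < x₁ + x₂ := by nlinarith
  refine ⟨h2a, h3, by linarith, by nlinarith, ?_⟩
  intro X hX hXeq
  have : (X - (x₁ - (a - x₂))) * (X + (x₁ - (a - x₂)) + (a - x₂)) = 0 := by nlinarith
  rcases mul_eq_zero.mp this with h | h
  · linarith
  · exfalso; nlinarith
end

section
/- Let a > 0 and c > 0 be real numbers, and let x₁ < x₂ be the two distinct positive roots of a·x² − x³ = c. Then x₂² = (a − x₁)·(x₁ + x₂), and x₁ satisfies the quadratic relation x₁² − (a − x₂)·x₁ = x₂·(a − x₂). -/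
/-- Hogendijk's relations (26) and (27) between the two positive roots x₁ < x₂ of
a·x² − x³ = c: x₂² = (a − x₁)(x₁ + x₂) and x₁² − (a − x₂)x₁ = x₂(a − x₂). -/
theorem tusi_eq21_root_relations (a c x₁ x₂ : ℝ) (ha : 0 < a) (hc : 0 < c)
    (h₁ : 0 < x₁) (h₁₂ : x₁ < x₂)
    (e₁ : a * x₁ ^ 2 - x₁ ^ 3 = c) (e₂ : a * x₂ ^ 2 - x₂ ^ 3 = c) :
    x₂ ^ 2 = (a - x₁) * (x₁ + x₂) ∧
    x₁ ^ 2 - (a - x₂) * x₁ = x₂ * (a - x₂) := by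
  have hne : x₁ - x₂ ≠ 0 := by linarith
  have key : a * (x₁ + x₂) = x₁ ^ 2 + x₁ * x₂ + x₂ ^ 2 := by
    have h : (x₁ - x₂) * (a * (x₁ + x₂)) = (x₁ - x₂) * (x₁ ^ 2 + x₁ * x₂ + x₂ ^ 2) := by
      nlinarith [e₁, e₂]
    exact mul_left_cancel₀ hne h
  constructor <;> nlinarith [key]
end

section
/- Let a > 0 and c be real numbers with 0 < c < 4a³/27, and let x₁ be the unique real number in the interval (0, 2a/3) with a·x₁² − x₁³ = c. Then: (i) x₁ = a/3 if and only if c = 2a³/27; (ii) x₁ > a/3 if and only if c > 2a³/27; (iii) x₁ < a/3 if and only if c < 2a³/27. -/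
/-- Al-Tūsī's Lemma 2: the smaller root x₁ ∈ (0, 2a/3) of a·x² − x³ = c equals,
exceeds, or is less than a/3 according as c equals, exceeds, or is less than
half the maximum value, 2a³/27. -/
theorem tusi_lemma2 (a c x₁ : ℝ) (ha : 0 < a) (hc : 0 < c)
    (hcm : c < 4 * a ^ 3 / 27) (h₁ : 0 < x₁) (h₁' : x₁ < 2 * a / 3)
    (e₁ : a * x₁ ^ 2 - x₁ ^ 3 = c) :
    (x₁ = a / 3 ↔ c = 2 * a ^ 3 / 27) ∧
    (a / 3 < x₁ ↔ 2 * a ^ 3 / 27 < c) ∧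
    (x₁ < a / 3 ↔ c < 2 * a ^ 3 / 27) := by
  have hlt : x₁ < a / 3 → c < 2 * a ^ 3 / 27 := by
    intro h
    nlinarith [mul_pos h₁ (sub_pos.mpr h), sq_nonneg (x₁ - a / 3), sq_nonneg x₁,
      mul_pos (sub_pos.mpr h) (sub_pos.mpr h)]
  have hgt : a / 3 < x₁ → 2 * a ^ 3 / 27 < c := by
    intro h
    nlinarith [mul_pos (sub_pos.mpr h) (sub_pos.mpr h₁'), sq_nonneg (x₁ - a / 3),
      mul_pos h₁ (sub_pos.mpr h)]
  have heq : x₁ = a / 3 → c = 2 * a ^ 3 / 27 := by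
    intro h; subst h; ring_nf; ring_nf at e₁; linarith
  rcases lt_trichotomy x₁ (a / 3) with h | h | h
  · have := hlt h
    exact ⟨⟨fun h' => absurd h' (by linarith), fun h' => by linarith⟩,
      ⟨fun h' => absurd h' (by linarith), fun h' => by linarith⟩,
      ⟨fun _ => this, fun _ => h⟩⟩
  · have := heq h
    exact ⟨⟨fun _ => this, fun _ => h⟩,
      ⟨fun h' => absurd h' (by linarith), fun h' => by linarith⟩,
      ⟨fun h' => absurd h' (by linarith), fun h' => by linarith⟩⟩
  · have := hgt h
    exact ⟨⟨fun h' => absurd h' (by linarith), fun h' => by linarith⟩,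
      ⟨fun _ => this, fun _ => h⟩,
      ⟨fun h' => absurd h' (by linarith), fun h' => by linarith⟩⟩
end

section
/- Let a > 0 and c be real numbers with 2a³/27 < c < 4a³/27, and let x₁ be the unique real number in (0, 2a/3) with a·x₁² − x₁³ = c. Set y = 2a/3 − x₁. Then 0 < y < a/3 and a·y² − y³ = 4a³/27 − c; that is, y is a root, smaller than a/3, of an equation of the same type (21) with the same coefficient a and constant term 4a³/27 − c. -/
/-- When c > 2a³/27, the substitution y = 2a/3 − x₁ turns the smaller root x₁ of
a·x² − x³ = c into a root y < a/3 of the same type of equation with constant term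
4a³/27 − c. -/
theorem tusi_eq21_algorithm_substitution (a c x₁ : ℝ) (ha : 0 < a)
    (hc : 2 * a ^ 3 / 27 < c) (hcm : c < 4 * a ^ 3 / 27)
    (h₁ : 0 < x₁) (h₁' : x₁ < 2 * a / 3)
    (e₁ : a * x₁ ^ 2 - x₁ ^ 3 = c) :
    0 < 2 * a / 3 - x₁ ∧ 2 * a / 3 - x₁ < a / 3 ∧
    a * (2 * a / 3 - x₁) ^ 2 - (2 * a / 3 - x₁) ^ 3 = 4 * a ^ 3 / 27 - c := by
  refine ⟨by linarith, by nlinarith [sq_nonneg (x₁ - a/3), sq_nonneg (2*a/3 - x₁), mul_pos h₁ h₁], by linear_combination -e₁⟩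
end

section
/- Let b > 0 and c > 0 be real numbers and set f(x) = b·x − x³. Then: (i) if c > (2b/3)·√(b/3), there is no real x > 0 with f(x) = c; (ii) if c = (2b/3)·√(b/3), then x = √(b/3) is the unique positive real x with f(x) = c; (iii) if c < (2b/3)·√(b/3), there exist exactly two positive real numbers x₁ < x₂ with f(x₁) = f(x₂) = c, and they satisfy 0 < x₁ < √(b/3) < x₂ < √b. -/
/-- Al-Tūsī's equation (22): b·x − x³ = c with b, c > 0 has no, one, or exactly two
positive roots according as c is greater than, equal to, or less than the maximum
value (2b/3)·√(b/3). -/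
theorem tusi_eq22_roots (b c : ℝ) (hb : 0 < b) (hc : 0 < c) :
    ((2 * b / 3) * Real.sqrt (b / 3) < c →
      ¬ ∃ x : ℝ, 0 < x ∧ b * x - x ^ 3 = c) ∧
    (c = (2 * b / 3) * Real.sqrt (b / 3) →
      (b * Real.sqrt (b / 3) - (Real.sqrt (b / 3)) ^ 3 = c ∧
        ∀ x : ℝ, 0 < x → b * x - x ^ 3 = c → x = Real.sqrt (b / 3))) ∧
    (c < (2 * b / 3) * Real.sqrt (b / 3) →
      ∃ x₁ x₂ : ℝ, 0 < x₁ ∧ x₁ < x₂ ∧ x₁ < Real.sqrt (b / 3) ∧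
        Real.sqrt (b / 3) < x₂ ∧ x₂ < Real.sqrt b ∧
        b * x₁ - x₁ ^ 3 = c ∧ b * x₂ - x₂ ^ 3 = c ∧
        ∀ x : ℝ, 0 < x → b * x - x ^ 3 = c → (x = x₁ ∨ x = x₂)) := by
  have hb3 : (0:ℝ) < b / 3 := by linarith
  set s := Real.sqrt (b / 3) with hsdef
  have hs : 0 < s := Real.sqrt_pos.2 hb3
  have hs2 : s ^ 2 = b / 3 := Real.sq_sqrt hb3.le
  have hs3 : s ^ 3 = (b / 3) * s := by rw [pow_succ, hs2]
  have hfs : b * s - s ^ 3 = (2 * b / 3) * s := by rw [hs3]; ring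
  refine ⟨?_, ?_, ?_⟩
  · rintro h ⟨x, hx, hfx⟩
    nlinarith [mul_nonneg (sq_nonneg (x - s)) (by linarith : (0:ℝ) ≤ x + 2 * s)]
  · intro hceq
    refine ⟨by rw [hfs, hceq], fun x hx hfx => ?_⟩
    have h0 : (x - s) ^ 2 * (x + 2 * s) = 0 := by
      linear_combination (-1) * hfx - hceq - 3 * x * hs2 + 2 * hs3
    rcases mul_eq_zero.1 h0 with h | h
    · have := sq_eq_zero_iff.1 h
      linarith
    · linarith
  · intro hclt
    have hsb : s < Real.sqrt b := by
      apply Real.sqrt_lt_sqrt hb3.le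
      linarith
    have hrb : 0 < Real.sqrt b := Real.sqrt_pos.2 hb
    have hrb2 : Real.sqrt b ^ 2 = b := Real.sq_sqrt hb.le
    have hcont : Continuous (fun x : ℝ => b * x - x ^ 3) := by continuity
    -- first root in (0, s)
    have h1 : ∃ x₁ ∈ Set.Ioo (0:ℝ) s,
        (fun x : ℝ => b * x - x ^ 3) x₁ = c := by
      have hsub := intermediate_value_Ioo hs.le hcont.continuousOn
      have hmem : c ∈ Set.Ioo ((fun x : ℝ => b * x - x ^ 3) 0)
          ((fun x : ℝ => b * x - x ^ 3) s) := by
        simp only [Set.mem_Ioo]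
        constructor
        · simpa using hc
        · simp only [hfs]; exact hclt
      obtain ⟨x₁, hx₁, hfx₁⟩ := hsub hmem
      exact ⟨x₁, hx₁, hfx₁⟩
    -- second root in (s, √b)
    have h2 : ∃ x₂ ∈ Set.Ioo s (Real.sqrt b),
        (fun x : ℝ => b * x - x ^ 3) x₂ = c := by
      have hsub := intermediate_value_Ioo' hsb.le hcont.continuousOn
      have hmem : c ∈ Set.Ioo ((fun x : ℝ => b * x - x ^ 3) (Real.sqrt b))
          ((fun x : ℝ => b * x - x ^ 3) s) := by
        simp only [Set.mem_Ioo]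
        constructor
        · have : b * Real.sqrt b - Real.sqrt b ^ 3 = 0 := by
            rw [pow_succ, hrb2]; ring
          simp only [this]; exact hc
        · simp only [hfs]; exact hclt
      obtain ⟨x₂, hx₂, hfx₂⟩ := hsub hmem
      exact ⟨x₂, hx₂, hfx₂⟩
    obtain ⟨x₁, ⟨hx₁0, hx₁s⟩, hfx₁⟩ := h1
    obtain ⟨x₂, ⟨hx₂s, hx₂b⟩, hfx₂⟩ := h2
    simp only at hfx₁ hfx₂
    have hx12 : x₁ < x₂ := lt_trans hx₁s hx₂s
    refine ⟨x₁, x₂, hx₁0, hx12, hx₁s, hx₂s, hx₂b, hfx₁, hfx₂, ?_⟩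
    intro x hx hfx
    have hbeq : b = x₁ ^ 2 + x₁ * x₂ + x₂ ^ 2 := by
      have key : (x₁ - x₂) * (b - (x₁ ^ 2 + x₁ * x₂ + x₂ ^ 2)) = 0 := by
        linear_combination hfx₁ - hfx₂
      rcases mul_eq_zero.1 key with h | h
      · exfalso; linarith [sub_neg.2 hx12, h]
      · linarith
    have hceq2 : c = x₁ * x₂ * (x₁ + x₂) := by
      linear_combination (-1) * hfx₁ + x₁ * hbeq
    have hfac : (x - x₁) * (x - x₂) * (x + x₁ + x₂) = 0 := by
      linear_combination (-1) * hfx + x * hbeq - hceq2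
    rcases mul_eq_zero.1 hfac with h | h
    · rcases mul_eq_zero.1 h with h | h
      · left; linarith [sub_eq_zero.1 h]
      · right; linarith [sub_eq_zero.1 h]
    · exfalso; linarith
end

section
/- Let b > 0 and c > 0 be real numbers with c < (2b/3)·√(b/3), and let X > 0 be a real number. Then x = √(b/3) + X satisfies b·x − x³ = c if and only if X satisfies X³ + √(3b)·X² = (2b/3)·√(b/3) − c. Consequently, the larger positive root of b·x − x³ = c equals √(b/3) + X₀, where X₀ is the unique positive root of X³ + √(3b)·X² = (2b/3)·√(b/3) − c. -/
/-- Al-Tūsī's determination of the larger root of equation (22) via the substitution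
x = √(b/3) + X, reducing it to X³ + √(3b)·X² = (2b/3)·√(b/3) − c, of type (15). -/
theorem tusi_eq22_larger_root (b c X : ℝ) (hb : 0 < b) (hc : 0 < c)
    (hcm : c < (2 * b / 3) * Real.sqrt (b / 3)) (hX : 0 < X) :
    (b * (Real.sqrt (b / 3) + X) - (Real.sqrt (b / 3) + X) ^ 3 = c ↔
      X ^ 3 + Real.sqrt (3 * b) * X ^ 2 = (2 * b / 3) * Real.sqrt (b / 3) - c) ∧
    (∀ X₀ : ℝ, 0 < X₀ →
      X₀ ^ 3 + Real.sqrt (3 * b) * X₀ ^ 2 = (2 * b / 3) * Real.sqrt (b / 3) - c →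
      (b * (Real.sqrt (b / 3) + X₀) - (Real.sqrt (b / 3) + X₀) ^ 3 = c ∧
        ∀ x : ℝ, 0 < x → b * x - x ^ 3 = c → x ≤ Real.sqrt (b / 3) + X₀)) := by
  set s := Real.sqrt (b / 3) with hsdef
  have hs0 : 0 < s := Real.sqrt_pos.mpr (by linarith)
  have hs2 : s ^ 2 = b / 3 := Real.sq_sqrt (by linarith)
  have h3b : Real.sqrt (3 * b) = 3 * s := by
    rw [show (3 : ℝ) * b = 3 ^ 2 * (b / 3) by ring, Real.sqrt_mul (by positivity), hsdef,
      Real.sqrt_sq (by norm_num)]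
  rw [h3b]
  constructor
  · constructor
    · intro h
      linear_combination -h - (s + 3 * X) * hs2
    · intro h
      linear_combination -h - (s + 3 * X) * hs2
  · intro X₀ hX₀ hroot
    constructor
    · linear_combination -hroot - (s + 3 * X₀) * hs2
    · intro x hx hxeq
      by_contra hgt
      push_neg at hgt
      set Y := x - s with hY
      have hYgt : X₀ < Y := by simp [hY]; linarith
      have hYeq : Y ^ 3 + 3 * s * Y ^ 2 = (2 * b / 3) * s - c := by
        have hx3 : x = s + Y := by ring
        rw [hx3] at hxeq
        linear_combination -hxeq - (s + 3 * Y) * hs2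
      have hYpos : 0 < Y := lt_trans hX₀ hYgt
      have hd : 0 < Y - X₀ := sub_pos.mpr hYgt
      clear_value s Y
      nlinarith [mul_pos (mul_pos hd hYpos) hYpos, mul_pos (mul_pos hd hYpos) hX₀,
        mul_pos (mul_pos hd hX₀) hX₀, mul_pos (mul_pos hs0 hd) (add_pos hYpos hX₀)]
end

section
/- Let a > 0, b > 0, c > 0 be real numbers, set f(x) = b·x − a·x² − x³, and let x₀ = (−a + √(a² + 3b))/3 be the positive root of x² + (2a/3)·x = b/3. Then: (i) if c > f(x₀), there is no real x > 0 with f(x) = c; (ii) if c = f(x₀), then x₀ is the unique positive real x with f(x) = c; (iii) if c < f(x₀), there exist exactly two positive real numbers x₁ < x₂ with f(x₁) = f(x₂) = c, and they satisfy 0 < x₁ < x₀ < x₂. -/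
/-- Al-Tūsī's equation (23): b·x − a·x² − x³ = c has no, one, or exactly two positive
roots according as c is greater than, equal to, or less than the maximum value f(x₀),
where x₀ = (−a + √(a² + 3b))/3. -/
theorem tusi_eq23_roots (a b c x₀ : ℝ) (ha : 0 < a) (hb : 0 < b) (hc : 0 < c)
    (hx₀ : x₀ = (-a + Real.sqrt (a ^ 2 + 3 * b)) / 3) :
    (b * x₀ - a * x₀ ^ 2 - x₀ ^ 3 < c →
      ¬ ∃ x : ℝ, 0 < x ∧ b * x - a * x ^ 2 - x ^ 3 = c) ∧
    (c = b * x₀ - a * x₀ ^ 2 - x₀ ^ 3 →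
      (b * x₀ - a * x₀ ^ 2 - x₀ ^ 3 = c ∧
        ∀ x : ℝ, 0 < x → b * x - a * x ^ 2 - x ^ 3 = c → x = x₀)) ∧
    (c < b * x₀ - a * x₀ ^ 2 - x₀ ^ 3 →
      ∃ x₁ x₂ : ℝ, 0 < x₁ ∧ x₁ < x₂ ∧ x₁ < x₀ ∧ x₀ < x₂ ∧
        b * x₁ - a * x₁ ^ 2 - x₁ ^ 3 = c ∧ b * x₂ - a * x₂ ^ 2 - x₂ ^ 3 = c ∧
        ∀ x : ℝ, 0 < x → b * x - a * x ^ 2 - x ^ 3 = c → (x = x₁ ∨ x = x₂)) := by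
  set f : ℝ → ℝ := fun x => b * x - a * x ^ 2 - x ^ 3 with hf
  have hs : Real.sqrt (a ^ 2 + 3 * b) ^ 2 = a ^ 2 + 3 * b := by
    rw [Real.sq_sqrt]; nlinarith
  have hsa : a < Real.sqrt (a ^ 2 + 3 * b) := by
    nlinarith [Real.sqrt_nonneg (a ^ 2 + 3 * b)]
  have hx0pos : 0 < x₀ := by rw [hx₀]; linarith
  have hb' : 3 * x₀ ^ 2 + 2 * a * x₀ = b := by
    rw [hx₀]; field_simp; nlinarith
  -- key identity
  have key : ∀ x : ℝ, (b * x₀ - a * x₀ ^ 2 - x₀ ^ 3) - (b * x - a * x ^ 2 - x ^ 3)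
      = (x - x₀) ^ 2 * (x + 2 * x₀ + a) := by
    intro x; linear_combination (x - x₀) * hb'
  have hle : ∀ x : ℝ, 0 < x → b * x - a * x ^ 2 - x ^ 3 ≤ b * x₀ - a * x₀ ^ 2 - x₀ ^ 3 := by
    intro x hx
    nlinarith [key x, sq_nonneg (x - x₀)]
  have mono1 : ∀ u v : ℝ, 0 ≤ u → u < v → v ≤ x₀ →
      b * u - a * u ^ 2 - u ^ 3 < b * v - a * v ^ 2 - v ^ 3 := by
    intro u v hu huv hv
    have hux : u < x₀ := lt_of_lt_of_le huv hv
    have e : (b * v - a * v ^ 2 - v ^ 3) - (b * u - a * u ^ 2 - u ^ 3)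
        = (v - u) * (a * (x₀ - u)) + (v - u) * (a * (x₀ - v))
          + (v - u) * ((x₀ - u) * (x₀ + u)) + (v - u) * ((x₀ - v) * (x₀ + v))
          + (v - u) * (x₀ * x₀ - u * v) := by
      linear_combination (u - v) * hb'
    have t1 : 0 < (v - u) * (a * (x₀ - u)) :=
      mul_pos (by linarith) (mul_pos ha (by linarith))
    have t2 : 0 ≤ (v - u) * (a * (x₀ - v)) := by
      apply mul_nonneg (by linarith); apply mul_nonneg ha.le (by linarith)
    have t3 : 0 ≤ (v - u) * ((x₀ - u) * (x₀ + u)) := by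
      apply mul_nonneg (by linarith); apply mul_nonneg (by linarith) (by linarith)
    have t4 : 0 ≤ (v - u) * ((x₀ - v) * (x₀ + v)) := by
      apply mul_nonneg (by linarith); apply mul_nonneg (by linarith) (by linarith)
    have t5 : 0 ≤ (v - u) * (x₀ * x₀ - u * v) := by
      apply mul_nonneg (by linarith); nlinarith
    linarith
  have mono2 : ∀ u v : ℝ, x₀ ≤ u → u < v →
      b * v - a * v ^ 2 - v ^ 3 < b * u - a * u ^ 2 - u ^ 3 := by
    intro u v hu huv
    have hvx : x₀ < v := lt_of_le_of_lt hu huv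
    have e : (b * u - a * u ^ 2 - u ^ 3) - (b * v - a * v ^ 2 - v ^ 3)
        = (v - u) * (a * (u - x₀)) + (v - u) * (a * (v - x₀))
          + (v - u) * ((u - x₀) * (u + x₀)) + (v - u) * ((v - x₀) * (v + x₀))
          + (v - u) * (u * v - x₀ * x₀) := by
      linear_combination (v - u) * hb'
    have t1 : 0 < (v - u) * (a * (v - x₀)) :=
      mul_pos (by linarith) (mul_pos ha (by linarith))
    have t2 : 0 ≤ (v - u) * (a * (u - x₀)) := by
      apply mul_nonneg (by linarith); apply mul_nonneg ha.le (by linarith)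
    have t3 : 0 ≤ (v - u) * ((u - x₀) * (u + x₀)) := by
      apply mul_nonneg (by linarith); apply mul_nonneg (by linarith) (by linarith)
    have t4 : 0 ≤ (v - u) * ((v - x₀) * (v + x₀)) := by
      apply mul_nonneg (by linarith); apply mul_nonneg (by linarith) (by linarith)
    have t5 : 0 ≤ (v - u) * (u * v - x₀ * x₀) := by
      apply mul_nonneg (by linarith); nlinarith
    linarith
  refine ⟨?_, ?_, ?_⟩
  · rintro h ⟨x, hx, hfx⟩
    have := hle x hx
    linarith
  · intro h
    refine ⟨h.symm, fun x hx hfx => ?_⟩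
    have hk := key x
    have hpos : 0 < x + 2 * x₀ + a := by linarith
    have h0 : (x - x₀) ^ 2 * (x + 2 * x₀ + a) = 0 := by linarith
    have h1 : (x - x₀) ^ 2 = 0 := by
      rcases mul_eq_zero.mp h0 with h' | h'
      · exact h'
      · linarith
    have := pow_eq_zero_iff (n := 2) (by norm_num) |>.mp h1
    linarith
  · intro h
    have hcont : Continuous f :=
      ((continuous_const.mul continuous_id).sub (continuous_const.mul (continuous_pow 2))).sub
        (continuous_pow 3)
    -- first root in (0, x₀)
    have h1 : c ∈ Set.Icc (f 0) (f x₀) := by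
      constructor <;> simp only [hf] <;> [skip; skip] <;> · norm_num; linarith
    obtain ⟨x₁, hx₁mem, hx₁⟩ := intermediate_value_Icc (le_of_lt hx0pos) hcont.continuousOn h1
    have hfx₁ : b * x₁ - a * x₁ ^ 2 - x₁ ^ 3 = c := hx₁
    have hx₁ne0 : x₁ ≠ 0 := by
      intro h0; rw [h0] at hfx₁; norm_num at hfx₁; linarith
    have hx₁nex₀ : x₁ ≠ x₀ := by
      intro h0; rw [h0] at hfx₁; linarith
    have hx₁pos : 0 < x₁ := lt_of_le_of_ne hx₁mem.1 (Ne.symm hx₁ne0)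
    have hx₁lt : x₁ < x₀ := lt_of_le_of_ne hx₁mem.2 hx₁nex₀
    -- second root in (x₀, R)
    set R : ℝ := a + b + x₀ + 1 with hR
    have hRx₀ : x₀ < R := by linarith
    have hRpos : 0 < R := by linarith
    have hneg : b - a * R - R ^ 2 < 0 := by nlinarith
    have hfR : f R < c := by
      have : f R = R * (b - a * R - R ^ 2) := by simp only [hf]; ring
      rw [this]
      have := mul_neg_of_pos_of_neg hRpos hneg
      linarith
    have h2 : c ∈ Set.Icc (f R) (f x₀) := ⟨le_of_lt hfR, le_of_lt h⟩
    obtain ⟨x₂, hx₂mem, hx₂⟩ := intermediate_value_Icc' (le_of_lt hRx₀) hcont.continuousOn h2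
    have hfx₂ : b * x₂ - a * x₂ ^ 2 - x₂ ^ 3 = c := hx₂
    have hx₂nex₀ : x₂ ≠ x₀ := by
      intro h0; rw [h0] at hfx₂; linarith
    have hx₂gt : x₀ < x₂ := lt_of_le_of_ne hx₂mem.1 (Ne.symm hx₂nex₀)
    refine ⟨x₁, x₂, hx₁pos, lt_trans hx₁lt hx₂gt, hx₁lt, hx₂gt, hfx₁, hfx₂, ?_⟩
    intro x hx hfx
    rcases lt_trichotomy x x₀ with hlt | heq | hgt
    · left
      rcases lt_trichotomy x x₁ with h' | h' | h'
      · have := mono1 x x₁ (le_of_lt hx) h' (le_of_lt hx₁lt); linarith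
      · exact h'
      · have := mono1 x₁ x (le_of_lt hx₁pos) h' (le_of_lt hlt); linarith
    · exfalso; rw [heq] at hfx; linarith
    · right
      rcases lt_trichotomy x x₂ with h' | h' | h'
      · have := mono2 x x₂ (le_of_lt hgt) h'; linarith
      · exact h'
      · have := mono2 x₂ x (le_of_lt hx₂gt) h'; linarith
end

section
/- Let a > 0, b > 0, c > 0 be real numbers with √b > a/2 (equivalently b > a²/4). Then there is no real x > 0 with a·x² − b·x − x³ = c; indeed, a·x² − b·x − x³ < 0 for every x > 0. -/
/-- Al-Tūsī's equation (24) is impossible when √b > a/2: the expression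
a·x² − b·x − x³ is negative for every x > 0, so it never equals c > 0. -/
theorem tusi_eq24_impossible (a b c : ℝ) (ha : 0 < a) (hb : 0 < b) (hc : 0 < c)
    (hab : a / 2 < Real.sqrt b) :
    (¬ ∃ x : ℝ, 0 < x ∧ a * x ^ 2 - b * x - x ^ 3 = c) ∧
    ∀ x : ℝ, 0 < x → a * x ^ 2 - b * x - x ^ 3 < 0 := by
  have hb' : a ^ 2 / 4 < b := by
    have h1 : (a / 2) ^ 2 < Real.sqrt b ^ 2 := by
      apply sq_lt_sq' _ hab
      nlinarith [Real.sqrt_nonneg b]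
    rw [Real.sq_sqrt hb.le] at h1
    nlinarith
  have key : ∀ x : ℝ, 0 < x → a * x ^ 2 - b * x - x ^ 3 < 0 := by
    intro x hx
    nlinarith [sq_nonneg (x - a / 2), mul_pos hx hx]
  refine ⟨?_, key⟩
  rintro ⟨x, hx, hxc⟩
  have := key x hx
  linarith
end

section
/- Let a > 0 and b > 0 be real numbers with a² > 4b, and set x₀ = (a + √(a² − 3b))/3, the larger root of 3x² + b = 2a·x. Then a·x₀² − b·x₀ − x₀³ > 0, and for every real x > 0 with x ≠ x₀, one has a·x² − b·x − x³ < a·x₀² − b·x₀ − x₀³. In other words, f(x) = a·x² − b·x − x³ attains its maximum value on (0, ∞) exactly at x₀. -/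
/-- Al-Tūsī's equation (24) with a² > 4b: f(x) = a·x² − b·x − x³ attains a positive
maximum on (0, ∞) exactly at x₀ = (a + √(a² − 3b))/3, the larger root of
3x² + b = 2a·x. -/
theorem tusi_eq24_maximum (a b x₀ : ℝ) (ha : 0 < a) (hb : 0 < b)
    (hab : 4 * b < a ^ 2)
    (hx₀ : x₀ = (a + Real.sqrt (a ^ 2 - 3 * b)) / 3) :
    0 < a * x₀ ^ 2 - b * x₀ - x₀ ^ 3 ∧
    ∀ x : ℝ, 0 < x → x ≠ x₀ →
      a * x ^ 2 - b * x - x ^ 3 < a * x₀ ^ 2 - b * x₀ - x₀ ^ 3 := by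
  set s := Real.sqrt (a ^ 2 - 3 * b) with hsdef
  have h3b : 0 ≤ a ^ 2 - 3 * b := by nlinarith
  have hs2 : s ^ 2 = a ^ 2 - 3 * b := Real.sq_sqrt h3b
  have hs0 : 0 ≤ s := Real.sqrt_nonneg _
  have hsa : a / 2 < s := by nlinarith
  subst hx₀
  constructor
  · nlinarith [mul_pos ha hb]
  · intro x hx hne
    have h1 : 0 < (x - (a + s) / 3) ^ 2 := by
      have : x - (a + s) / 3 ≠ 0 := sub_ne_zero.mpr hne
      positivity
    have h2 : 0 < x - (a - 2 * s) / 3 := by nlinarith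
    nlinarith [mul_pos h1 h2]
end

section
/- Let a > 0, b > 0, c > 0 be real numbers with a² > 4b, set f(x) = a·x² − b·x − x³, and let x₀ = (a + √(a² − 3b))/3. Then: (i) if c > f(x₀), there is no real x > 0 with f(x) = c; (ii) if c = f(x₀), then x₀ is the unique positive real x with f(x) = c; (iii) if c < f(x₀), there exist exactly two positive real numbers x₁ < x₂ with f(x₁) = f(x₂) = c, and they satisfy (a − √(a² − 4b))/2 < x₁ < x₀ < x₂ < (a + √(a² − 4b))/2. -/
/-- Al-Tūsī's equation (24) with a² > 4b: a·x² − b·x − x³ = c has no, one, or exactly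
two positive roots according as c is greater than, equal to, or less than f(x₀) with
x₀ = (a + √(a² − 3b))/3; the two roots are localized between (a ± √(a² − 4b))/2. -/
theorem tusi_eq24_roots (a b c x₀ : ℝ) (ha : 0 < a) (hb : 0 < b) (hc : 0 < c)
    (hab : 4 * b < a ^ 2)
    (hx₀ : x₀ = (a + Real.sqrt (a ^ 2 - 3 * b)) / 3) :
    (a * x₀ ^ 2 - b * x₀ - x₀ ^ 3 < c →
      ¬ ∃ x : ℝ, 0 < x ∧ a * x ^ 2 - b * x - x ^ 3 = c) ∧
    (c = a * x₀ ^ 2 - b * x₀ - x₀ ^ 3 →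
      (a * x₀ ^ 2 - b * x₀ - x₀ ^ 3 = c ∧
        ∀ x : ℝ, 0 < x → a * x ^ 2 - b * x - x ^ 3 = c → x = x₀)) ∧
    (c < a * x₀ ^ 2 - b * x₀ - x₀ ^ 3 →
      ∃ x₁ x₂ : ℝ, 0 < x₁ ∧ x₁ < x₂ ∧
        (a - Real.sqrt (a ^ 2 - 4 * b)) / 2 < x₁ ∧ x₁ < x₀ ∧ x₀ < x₂ ∧
        x₂ < (a + Real.sqrt (a ^ 2 - 4 * b)) / 2 ∧
        a * x₁ ^ 2 - b * x₁ - x₁ ^ 3 = c ∧ a * x₂ ^ 2 - b * x₂ - x₂ ^ 3 = c ∧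
        ∀ x : ℝ, 0 < x → a * x ^ 2 - b * x - x ^ 3 = c → (x = x₁ ∨ x = x₂)) := by
  set s := Real.sqrt (a ^ 2 - 3 * b) with hs
  set t := Real.sqrt (a ^ 2 - 4 * b) with ht
  have h3b : 0 < a ^ 2 - 3 * b := by nlinarith
  have h4b : 0 < a ^ 2 - 4 * b := by nlinarith
  have hs2 : s ^ 2 = a ^ 2 - 3 * b := Real.sq_sqrt h3b.le
  have ht2 : t ^ 2 = a ^ 2 - 4 * b := Real.sq_sqrt h4b.le
  have hs0 : 0 ≤ s := Real.sqrt_nonneg _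
  have ht0 : 0 < t := Real.sqrt_pos.mpr h4b
  -- a < 2s
  have h2s : a < 2 * s := by nlinarith [sq_nonneg (2 * s - a), sq_nonneg (2 * s + a)]
  -- t < a
  have hta : t < a := by nlinarith [sq_nonneg (a - t), sq_nonneg (a + t)]
  -- x₀ is a critical point
  have h3 : 3 * x₀ ^ 2 - 2 * a * x₀ + b = 0 := by
    rw [hx₀]; linear_combination hs2 / 3
  have hx₀pos : 0 < x₀ := by rw [hx₀]; positivity
  have hr : a - 2 * x₀ < 0 := by rw [hx₀]; linarith
  -- key identity
  have key : ∀ x : ℝ, (a * x₀ ^ 2 - b * x₀ - x₀ ^ 3) - (a * x ^ 2 - b * x - x ^ 3)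
      = (x - x₀) ^ 2 * (x - (a - 2 * x₀)) := fun x => by
    linear_combination (x - x₀) * h3
  refine ⟨?_, ?_, ?_⟩
  · rintro hclt ⟨x, hx, hfx⟩
    have hk := key x
    rw [hfx] at hk
    nlinarith [mul_nonneg (sq_nonneg (x - x₀)) (by linarith : (0:ℝ) ≤ x - (a - 2 * x₀))]
  · intro hcc
    refine ⟨hcc.symm, fun x hx hfx => ?_⟩
    have hk := key x
    rw [hfx, ← hcc, sub_self] at hk
    rcases mul_eq_zero.mp hk.symm with h | h
    · have := (pow_eq_zero_iff two_ne_zero).mp h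
      linarith [sub_eq_zero.mp this]
    · linarith
  · intro hclt
    set m : ℝ := (a - t) / 2 with hm
    set M : ℝ := (a + t) / 2 with hM
    have hm0 : 0 < m := by rw [hm]; linarith
    have hfm : a * m ^ 2 - b * m - m ^ 3 = 0 := by
      rw [hm]; linear_combination (-(a - t) / 8) * ht2
    have hfM : a * M ^ 2 - b * M - M ^ 3 = 0 := by
      rw [hM]; linear_combination (-(a + t) / 8) * ht2
    have hmx₀ : m < x₀ := by rw [hm, hx₀]; linarith
    have hx₀M : x₀ < M := by
      rw [hx₀, hM]
      nlinarith [mul_nonneg hs0 ht0.le]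
    have hcont : Continuous fun x : ℝ => a * x ^ 2 - b * x - x ^ 3 := by continuity
    -- first root
    obtain ⟨x₁, hx₁mem, hfx₁⟩ :=
      intermediate_value_Ioo hmx₀.le hcont.continuousOn
        (by rw [hfm]; exact ⟨hc, hclt⟩ : c ∈ Set.Ioo (a * m ^ 2 - b * m - m ^ 3)
          (a * x₀ ^ 2 - b * x₀ - x₀ ^ 3))
    obtain ⟨x₂, hx₂mem, hfx₂⟩ :=
      intermediate_value_Ioo' hx₀M.le hcont.continuousOn
        (by rw [hfM]; exact ⟨hc, hclt⟩ : c ∈ Set.Ioo (a * M ^ 2 - b * M - M ^ 3)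
          (a * x₀ ^ 2 - b * x₀ - x₀ ^ 3))
    obtain ⟨hmx₁, hx₁x₀⟩ := hx₁mem
    obtain ⟨hx₀x₂, hx₂M⟩ := hx₂mem
    have hx₁pos : 0 < x₁ := lt_trans hm0 hmx₁
    have hx₁x₂ : x₁ < x₂ := lt_trans hx₁x₀ hx₀x₂
    refine ⟨x₁, x₂, hx₁pos, hx₁x₂, hmx₁, hx₁x₀, hx₀x₂, hx₂M, hfx₁, hfx₂, ?_⟩
    -- uniqueness via Vieta
    intro x hx hfx
    have e1 : (b - (x₁ * x₂ + x₁ * (a - x₁ - x₂) + x₂ * (a - x₁ - x₂))) * x₁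
        + (c + x₁ * x₂ * (a - x₁ - x₂)) = 0 := by linear_combination -hfx₁
    have e2 : (b - (x₁ * x₂ + x₁ * (a - x₁ - x₂) + x₂ * (a - x₁ - x₂))) * x₂
        + (c + x₁ * x₂ * (a - x₁ - x₂)) = 0 := by linear_combination -hfx₂
    have hpe : b - (x₁ * x₂ + x₁ * (a - x₁ - x₂) + x₂ * (a - x₁ - x₂)) = 0 := by
      have h0 : (b - (x₁ * x₂ + x₁ * (a - x₁ - x₂) + x₂ * (a - x₁ - x₂))) * (x₁ - x₂) = 0 := by
        linear_combination e1 - e2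
      rcases mul_eq_zero.mp h0 with h | h
      · exact h
      · exact absurd (sub_eq_zero.mp h) hx₁x₂.ne
    have hqe : c + x₁ * x₂ * (a - x₁ - x₂) = 0 := by linear_combination e1 - x₁ * hpe
    have hx₃neg : a - x₁ - x₂ < 0 := by
      by_contra hcon
      push_neg at hcon
      linarith [mul_nonneg (mul_nonneg hx₁pos.le (by linarith : (0:ℝ) ≤ x₂)) hcon, hqe]
    have hfac : (x - x₁) * (x - x₂) * (x - (a - x₁ - x₂)) = 0 := by
      linear_combination -hfx - x * hpe - hqe
    rcases mul_eq_zero.mp hfac with h | h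
    · rcases mul_eq_zero.mp h with h' | h'
      · exact Or.inl (sub_eq_zero.mp h')
      · exact Or.inr (sub_eq_zero.mp h')
    · exact absurd ((sub_eq_zero.mp h) ▸ hx) (not_lt.mpr hx₃neg.le)
end

section
/- Let a > 0, b > 0, c > 0 be real numbers, set f(x) = a·x² + b·x − x³, and let x₀ = (a + √(a² + 3b))/3 be the positive root of 3x² = 2a·x + b. Then: (i) if c > f(x₀), there is no real x > 0 with f(x) = c; (ii) if c = f(x₀), then x₀ is the unique positive real x with f(x) = c; (iii) if c < f(x₀), there exist exactly two positive real numbers x₁ < x₂ with f(x₁) = f(x₂) = c, and they satisfy 0 < x₁ < x₀ < x₂. -/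
/-!
At a critical point `x₀` of `f x = a x² + b x - x³` the derivative factors as
`f' x = (x₀ - x) (3 (x + x₀) - 2a)`, and for `x₀ = (a + √(a² + 3b))/3` the second factor is
positive on `(0, ∞)`. Hence `f` increases strictly on `[0, x₀]` and decreases strictly on
`[x₀, ∞)`, so every value is taken at most once on each side of `x₀`. Since `f 0 = 0 < c` and
`f x → -∞`, the intermediate value theorem yields one root on each side when `c < f x₀`.
-/

open Set

def tusiCubic (a b x : ℝ) : ℝ := a * x ^ 2 + b * x - x ^ 3

lemma hasDerivAt_tusiCubic (a b x : ℝ) :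
    HasDerivAt (tusiCubic a b) (2 * a * x + b - 3 * x ^ 2) x := by
  have h := (((hasDerivAt_pow 2 x).const_mul a).add ((hasDerivAt_id' x).const_mul b)).sub
    (hasDerivAt_pow 3 x)
  exact h.congr_deriv (by norm_num; ring)

lemma continuous_tusiCubic (a b : ℝ) : Continuous (tusiCubic a b) := by
  unfold tusiCubic; fun_prop

lemma tusiCubic_zero (a b : ℝ) : tusiCubic a b 0 = 0 := by simp [tusiCubic]

lemma tusiCubic_nonpos {a b x : ℝ} (hb : 0 ≤ b) (hx : 1 ≤ x) (hab : a + b ≤ x) :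
    tusiCubic a b x ≤ 0 := by
  have : a * x + b ≤ x ^ 2 := by nlinarith
  unfold tusiCubic; nlinarith

lemma exists_tusiCubic_eq_of_lt_left {a b x₀ : ℝ} (hx₀ : 0 ≤ x₀) {c : ℝ} (hc : 0 < c)
    (hlt : c < tusiCubic a b x₀) : ∃ x ∈ Ioo 0 x₀, tusiCubic a b x = c := by
  have hc₀ : tusiCubic a b 0 < c := (tusiCubic_zero a b).symm ▸ hc
  exact intermediate_value_Ioo hx₀ (continuous_tusiCubic a b).continuousOn ⟨hc₀, hlt⟩

lemma exists_tusiCubic_eq_of_lt_right {a b x₀ : ℝ} (hb : 0 ≤ b) (hx₀ : 0 ≤ x₀) {c : ℝ}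
    (hc : 0 < c) (hlt : c < tusiCubic a b x₀) : ∃ x ∈ Ioi x₀, tusiCubic a b x = c := by
  set M := max (x₀ + 1) (a + b)
  have hM : x₀ + 1 ≤ M := le_max_left _ _
  have hfM : tusiCubic a b M < c :=
    (tusiCubic_nonpos hb (by linarith) (le_max_right _ _)).trans_lt hc
  obtain ⟨x, hx, hfx⟩ :=
    intermediate_value_Ioo' (by linarith) (continuous_tusiCubic a b).continuousOn ⟨hfM, hlt⟩
  exact ⟨x, hx.1, hfx⟩

section Critical

variable {a b x₀ : ℝ} (hcrit : 3 * x₀ ^ 2 = 2 * a * x₀ + b) (h2a : 2 * a ≤ 3 * x₀)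
include hcrit

lemma tusiCubic_deriv_eq_mul (x : ℝ) :
    2 * a * x + b - 3 * x ^ 2 = (x₀ - x) * (3 * (x + x₀) - 2 * a) := by
  linear_combination -hcrit

include h2a

lemma strictMonoOn_tusiCubic : StrictMonoOn (tusiCubic a b) (Icc 0 x₀) := by
  refine strictMonoOn_of_deriv_pos (convex_Icc 0 x₀) (continuous_tusiCubic a b).continuousOn ?_
  intro x hx
  rw [interior_Icc] at hx
  rw [(hasDerivAt_tusiCubic a b x).deriv, tusiCubic_deriv_eq_mul hcrit]
  exact mul_pos (by linarith [hx.2]) (by linarith [hx.1])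

lemma strictAntiOn_tusiCubic (hx₀ : 0 ≤ x₀) : StrictAntiOn (tusiCubic a b) (Ici x₀) := by
  refine strictAntiOn_of_deriv_neg (convex_Ici x₀) (continuous_tusiCubic a b).continuousOn ?_
  intro x hx
  rw [interior_Ici, mem_Ioi] at hx
  rw [(hasDerivAt_tusiCubic a b x).deriv, tusiCubic_deriv_eq_mul hcrit]
  exact mul_neg_of_neg_of_pos (by linarith) (by linarith)

lemma tusiCubic_lt_of_ne (hx₀ : 0 ≤ x₀) {x : ℝ} (hx : 0 ≤ x) (hne : x ≠ x₀) :
    tusiCubic a b x < tusiCubic a b x₀ := by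
  rcases hne.lt_or_gt with hlt | hgt
  · exact strictMonoOn_tusiCubic hcrit h2a ⟨hx, hlt.le⟩ ⟨hx₀, le_rfl⟩ hlt
  · exact strictAntiOn_tusiCubic hcrit h2a hx₀ self_mem_Ici hgt.le hgt

lemma tusiCubic_le (hx₀ : 0 ≤ x₀) {x : ℝ} (hx : 0 ≤ x) :
    tusiCubic a b x ≤ tusiCubic a b x₀ := by
  rcases eq_or_ne x x₀ with rfl | hne
  · exact le_rfl
  · exact (tusiCubic_lt_of_ne hcrit h2a hx₀ hx hne).le

lemma eq_of_tusiCubic_eq (hx₀ : 0 ≤ x₀) {x : ℝ} (hx : 0 ≤ x)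
    (heq : tusiCubic a b x = tusiCubic a b x₀) : x = x₀ := by
  by_contra hne
  exact (tusiCubic_lt_of_ne hcrit h2a hx₀ hx hne).ne heq

lemma eq_or_eq_of_tusiCubic_eq (hx₀ : 0 ≤ x₀) {x x₁ x₂ : ℝ} (hx₁ : x₁ ∈ Icc 0 x₀)
    (hx₂ : x₀ ≤ x₂) (hx : 0 ≤ x) (h₁ : tusiCubic a b x = tusiCubic a b x₁)
    (h₂ : tusiCubic a b x = tusiCubic a b x₂) : x = x₁ ∨ x = x₂ := by
  rcases le_total x x₀ with hle | hge
  · exact Or.inl ((strictMonoOn_tusiCubic hcrit h2a).injOn ⟨hx, hle⟩ hx₁ h₁)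
  · exact Or.inr ((strictAntiOn_tusiCubic hcrit h2a hx₀).injOn hge hx₂ h₂)

end Critical

section Root

variable {a b x₀ : ℝ} (hb : 0 ≤ b) (hx₀ : x₀ = (a + Real.sqrt (a ^ 2 + 3 * b)) / 3)
include hb hx₀

lemma critical_of_eq_sqrt : 3 * x₀ ^ 2 = 2 * a * x₀ + b := by
  have := Real.sq_sqrt (show 0 ≤ a ^ 2 + 3 * b by positivity)
  subst hx₀; linear_combination this / 3

lemma abs_add_le_of_eq_sqrt : |a| + a ≤ 3 * x₀ := by
  have := Real.abs_le_sqrt (show a ^ 2 ≤ a ^ 2 + 3 * b by linarith)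
  subst hx₀; linarith

end Root

theorem tusi_eq25_roots_general (a b c x₀ : ℝ) (hb : 0 < b) (hc : 0 < c)
    (hx₀ : x₀ = (a + Real.sqrt (a ^ 2 + 3 * b)) / 3) :
    (a * x₀ ^ 2 + b * x₀ - x₀ ^ 3 < c →
      ¬ ∃ x : ℝ, 0 < x ∧ a * x ^ 2 + b * x - x ^ 3 = c) ∧
    (c = a * x₀ ^ 2 + b * x₀ - x₀ ^ 3 →
      (a * x₀ ^ 2 + b * x₀ - x₀ ^ 3 = c ∧
        ∀ x : ℝ, 0 < x → a * x ^ 2 + b * x - x ^ 3 = c → x = x₀)) ∧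
    (c < a * x₀ ^ 2 + b * x₀ - x₀ ^ 3 →
      ∃ x₁ x₂ : ℝ, 0 < x₁ ∧ x₁ < x₂ ∧ x₁ < x₀ ∧ x₀ < x₂ ∧
        a * x₁ ^ 2 + b * x₁ - x₁ ^ 3 = c ∧ a * x₂ ^ 2 + b * x₂ - x₂ ^ 3 = c ∧
        ∀ x : ℝ, 0 < x → a * x ^ 2 + b * x - x ^ 3 = c → (x = x₁ ∨ x = x₂)) := by
  have hcrit := critical_of_eq_sqrt hb.le hx₀
  have habs := abs_add_le_of_eq_sqrt hb.le hx₀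
  have h2a : 2 * a ≤ 3 * x₀ := by linarith [le_abs_self a]
  have hx₀nn : 0 ≤ x₀ := by linarith [neg_abs_le a]
  refine ⟨?_, fun heq => ⟨heq.symm, fun x hx hfx => ?_⟩, fun hlt => ?_⟩
  · rintro hlt ⟨x, hx, hfx⟩
    exact (tusiCubic_le hcrit h2a hx₀nn hx.le).not_gt (hlt.trans_eq hfx.symm)
  · exact eq_of_tusiCubic_eq hcrit h2a hx₀nn hx.le (hfx.trans heq)
  · obtain ⟨x₁, ⟨hx₁, hx₁₀⟩, hfx₁⟩ := exists_tusiCubic_eq_of_lt_left hx₀nn hc hlt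
    obtain ⟨x₂, hx₂₀, hfx₂⟩ := exists_tusiCubic_eq_of_lt_right hb.le hx₀nn hc hlt
    refine ⟨x₁, x₂, hx₁, hx₁₀.trans hx₂₀, hx₁₀, hx₂₀, hfx₁, hfx₂, fun x hx hfx => ?_⟩
    exact eq_or_eq_of_tusiCubic_eq hcrit h2a hx₀nn ⟨hx₁.le, hx₁₀.le⟩ hx₂₀.le hx.le
      (hfx.trans hfx₁.symm) (hfx.trans hfx₂.symm)

/-- Al-Tūsī's equation (25): a·x² + b·x − x³ = c has no, one, or exactly two positive
roots according as c is greater than, equal to, or less than the maximum value f(x₀),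
where x₀ = (a + √(a² + 3b))/3. -/
theorem tusi_eq25_roots (a b c x₀ : ℝ) (ha : 0 < a) (hb : 0 < b) (hc : 0 < c)
    (hx₀ : x₀ = (a + Real.sqrt (a ^ 2 + 3 * b)) / 3) :
    (a * x₀ ^ 2 + b * x₀ - x₀ ^ 3 < c →
      ¬ ∃ x : ℝ, 0 < x ∧ a * x ^ 2 + b * x - x ^ 3 = c) ∧
    (c = a * x₀ ^ 2 + b * x₀ - x₀ ^ 3 →
      (a * x₀ ^ 2 + b * x₀ - x₀ ^ 3 = c ∧
        ∀ x : ℝ, 0 < x → a * x ^ 2 + b * x - x ^ 3 = c → x = x₀)) ∧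
    (c < a * x₀ ^ 2 + b * x₀ - x₀ ^ 3 →
      ∃ x₁ x₂ : ℝ, 0 < x₁ ∧ x₁ < x₂ ∧ x₁ < x₀ ∧ x₀ < x₂ ∧
        a * x₁ ^ 2 + b * x₁ - x₁ ^ 3 = c ∧ a * x₂ ^ 2 + b * x₂ - x₂ ^ 3 = c ∧
        ∀ x : ℝ, 0 < x → a * x ^ 2 + b * x - x ^ 3 = c → (x = x₁ ∨ x = x₂)) :=
  tusi_eq25_roots_general a b c x₀ hb hc hx₀
end

section
/- Let a > 0, b > 0, c > 0 be real numbers, set f(x) = a·x² + b·x − x³, let x₀ = (a + √(a² + 3b))/3 (the positive root of 3x² = 2a·x + b), and assume c < f(x₀). Then for a real number X > 0, the value x = x₀ + X satisfies f(x) = c if and only if X satisfies X³ + √(a² + 3b)·X² = f(x₀) − c. Consequently, the larger positive root of f(x) = c equals x₀ + X₀, where X₀ is the unique positive root of X³ + √(a² + 3b)·X² = f(x₀) − c. -/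
/-- Al-Tūsī's determination of the larger root of equation (25) via the substitution
x = x₀ + X with x₀ = (a + √(a² + 3b))/3, reducing it to an equation of type (15):
X³ + √(a² + 3b)·X² = f(x₀) − c. -/
theorem tusi_eq25_larger_root (a b c x₀ X : ℝ) (ha : 0 < a) (hb : 0 < b)
    (hc : 0 < c) (hx₀ : x₀ = (a + Real.sqrt (a ^ 2 + 3 * b)) / 3)
    (hcm : c < a * x₀ ^ 2 + b * x₀ - x₀ ^ 3) (hX : 0 < X) :
    (a * (x₀ + X) ^ 2 + b * (x₀ + X) - (x₀ + X) ^ 3 = c ↔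
      X ^ 3 + Real.sqrt (a ^ 2 + 3 * b) * X ^ 2 =
        (a * x₀ ^ 2 + b * x₀ - x₀ ^ 3) - c) ∧
    (∀ X₀ : ℝ, 0 < X₀ →
      X₀ ^ 3 + Real.sqrt (a ^ 2 + 3 * b) * X₀ ^ 2 =
        (a * x₀ ^ 2 + b * x₀ - x₀ ^ 3) - c →
      (a * (x₀ + X₀) ^ 2 + b * (x₀ + X₀) - (x₀ + X₀) ^ 3 = c ∧
        ∀ x : ℝ, 0 < x → a * x ^ 2 + b * x - x ^ 3 = c → x ≤ x₀ + X₀)) := by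
  set s := Real.sqrt (a ^ 2 + 3 * b) with hs
  have hs0 : 0 ≤ s := Real.sqrt_nonneg _
  have hs2 : s ^ 2 = a ^ 2 + 3 * b := Real.sq_sqrt (by positivity)
  have key : ∀ Y : ℝ, a * (x₀ + Y) ^ 2 + b * (x₀ + Y) - (x₀ + Y) ^ 3 =
      (a * x₀ ^ 2 + b * x₀ - x₀ ^ 3) - (Y ^ 3 + s * Y ^ 2) := by
    intro Y
    subst hx₀
    linear_combination (-Y / 3) * hs2
  constructor
  · rw [key X]
    constructor
    · intro h; linarith
    · intro h; linarith
  · intro X₀ hX₀ hroot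
    have hfx : a * (x₀ + X₀) ^ 2 + b * (x₀ + X₀) - (x₀ + X₀) ^ 3 = c := by
      rw [key X₀]; linarith
    refine ⟨hfx, fun x hx hfxc => ?_⟩
    by_contra hgt
    push_neg at hgt
    have hY : x₀ + X₀ < x := hgt
    set Y := x - x₀ with hYdef
    have hYX : X₀ < Y := by simp [hYdef]; linarith
    have hfy : a * (x₀ + Y) ^ 2 + b * (x₀ + Y) - (x₀ + Y) ^ 3 = c := by
      have : x₀ + Y = x := by ring
      rw [this]; exact hfxc
    rw [key Y] at hfy
    have heq : Y ^ 3 + s * Y ^ 2 = X₀ ^ 3 + s * X₀ ^ 2 := by linarith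
    have h3 : X₀ ^ 3 < Y ^ 3 := pow_lt_pow_left₀ hYX hX₀.le (by norm_num)
    have h2 : X₀ ^ 2 ≤ Y ^ 2 := by nlinarith
    have h4 : s * X₀ ^ 2 ≤ s * Y ^ 2 := mul_le_mul_of_nonneg_left h2 hs0
    linarith
end
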